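/- arXiv:2505.03081 — 2 statements merged into one kernel-verified Lean document; each statement's English description precedes it below -/
import Mathlib

section
/- Let S be a non-associative inverse semialgebra over a field F. Then for all x, y, z ∈ S and all additive idempotents e, f of S: (1) e·f + f·e = e + f; (2) x·0_y and 0_x·y are additive idempotents; (3) 0_{x·y} ⪯ 0_x·y, 0_{x·y} ⪯ x·0_y, and 0_{x·y} ⪯ 0_x·0_y; (4) x·(y+z) + neg(x·y + x·z) = 0_{x·y} + 0_{x·z}. -/
/-- An inverse semivector space over a field `F`. -/
structure InvSemivectorSpace (F : Type*) [Field F] (V : Type*) where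
  add : V → V → V
  neg : V → V
  smul : F → V → V
  add_comm' : ∀ x y : V, add x y = add y x
  add_assoc' : ∀ x y z : V, add (add x y) z = add x (add y z)
  add_neg_add : ∀ x : V, add (add x (neg x)) x = x
  neg_add_neg : ∀ x : V, add (add (neg x) x) (neg x) = neg x
  add_smul' : ∀ (α β : F) (x : V), smul (α + β) x = add (smul α x) (smul β x)
  smul_add' : ∀ (α : F) (x y : V), smul α (add x y) = add (smul α x) (smul α y)
  smul_smul' : ∀ (α β : F) (x : V), smul α (smul β x) = smul (α * β) x
  one_smul' : ∀ x : V, smul 1 x = x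

namespace InvSemivectorSpace

variable {F : Type*} [Field F] {V : Type*} (S : InvSemivectorSpace F V)

/-- `0_x := x + neg x`. -/
def z0 (x : V) : V := S.add x (S.neg x)

/-- The natural partial order: `x ⪯ y` iff `x = y + 0_x`. -/
def le (x y : V) : Prop := x = S.add y (S.z0 x)

/-- Additive idempotents. -/
def IsIdem (e : V) : Prop := S.add e e = e

end InvSemivectorSpace


/-- A non-associative inverse semialgebra over `F`. -/
structure NAInvSemialgebra (F : Type*) [Field F] (V : Type*) extends
    InvSemivectorSpace F V where
  mul : V → V → V
  smul_mul : ∀ (α : F), α ≠ 0 → ∀ x y : V, smul α (mul x y) = mul (smul α x) y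
  mul_smul'' : ∀ (α : F), α ≠ 0 → ∀ x y : V, smul α (mul x y) = mul x (smul α y)
  mul_add_le : ∀ x y z : V,
    toInvSemivectorSpace.le (add (mul x y) (mul x z)) (mul x (add y z))
  add_mul_le : ∀ x y z : V,
    toInvSemivectorSpace.le (add (mul x y) (mul z y)) (mul (add x z) y)
  mul_idem_add : ∀ x z e : V, toInvSemivectorSpace.IsIdem e →
    mul x (add e z) = add (mul x e) (mul x z)
  idem_add_mul : ∀ x z e : V, toInvSemivectorSpace.IsIdem e →
    mul (add x e) z = add (mul x z) (mul e z)
  idem_mul_le₁ : ∀ e f : V, toInvSemivectorSpace.IsIdem e → toInvSemivectorSpace.IsIdem f →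
    toInvSemivectorSpace.le (add e f) (mul e f)
  idem_mul_le₂ : ∀ e f : V, toInvSemivectorSpace.IsIdem e → toInvSemivectorSpace.IsIdem f →
    toInvSemivectorSpace.le (mul e f) f

namespace InvSemivectorSpace

variable {F : Type*} [Field F] {V : Type*} (T : InvSemivectorSpace F V)

theorem add_left_comm' (x y z : V) :
    T.add x (T.add y z) = T.add y (T.add x z) := by
  rw [← T.add_assoc', T.add_comm' x y, T.add_assoc']

theorem smul_zero_eq (x : V) :
    T.smul (0 : F) x = T.add x (T.smul (-1) x) := by
  rw [show (0:F) = 1 + (-1) by norm_num, T.add_smul', T.one_smul']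

theorem smul_zero_add (x : V) : T.add (T.smul (0:F) x) x = x := by
  have h := T.add_smul' (0:F) 1 x
  rw [T.one_smul'] at h
  rw [show (0:F) + 1 = 1 by norm_num, T.one_smul'] at h
  exact h.symm

theorem inv_unique {x a b : V}
    (ha1 : T.add (T.add x a) x = x) (ha2 : T.add (T.add a x) a = a)
    (hb1 : T.add (T.add x b) x = x) (hb2 : T.add (T.add b x) b = b) :
    a = b := by
  have ea : a = T.add a (T.add x b) :=
    calc a = T.add (T.add a x) a := ha2.symm
      _ = T.add (T.add a (T.add (T.add x b) x)) a := by rw [hb1]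
      _ = T.add (T.add (T.add a x) a) (T.add x b) := by
          simp only [T.add_assoc', T.add_comm', T.add_left_comm']
      _ = T.add a (T.add x b) := by rw [ha2]
  have eb : b = T.add b (T.add x a) :=
    calc b = T.add (T.add b x) b := hb2.symm
      _ = T.add (T.add b (T.add (T.add x a) x)) b := by rw [ha1]
      _ = T.add (T.add (T.add b x) b) (T.add x a) := by
          simp only [T.add_assoc', T.add_comm', T.add_left_comm']
      _ = T.add b (T.add x a) := by rw [hb2]
  calc a = T.add a (T.add x b) := ea
    _ = T.add b (T.add x a) := by
        simp only [T.add_assoc', T.add_comm', T.add_left_comm']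
    _ = b := eb.symm

theorem neg_eq (x : V) : T.neg x = T.smul (-1) x := by
  refine T.inv_unique (T.add_neg_add x) (T.neg_add_neg x) ?_ ?_
  · rw [← T.smul_zero_eq]; exact T.smul_zero_add x
  · rw [T.add_assoc', ← T.smul_zero_eq, ← T.add_smul']; norm_num

theorem idem_neg {e : V} (he : T.IsIdem e) : T.neg e = e := by
  have he' : T.add e e = e := he
  have h2 : T.smul (2:F) e = e := by
    rw [show (2:F) = 1 + 1 by norm_num, T.add_smul', T.one_smul', he']
  have hm1 : T.add (T.smul (-1:F) e) (T.smul (-1:F) e) = T.smul (-1:F) e := by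
    rw [← T.smul_add', he']
  have a1 : e = T.add e (T.smul (-1:F) e) := by
    conv_lhs => rw [← T.one_smul' e, show (1:F) = 2 + -1 by norm_num, T.add_smul', h2]
  have am1 : T.smul (-1:F) e = T.add e (T.smul (-1:F) e) := by
    conv_lhs => rw [show (-1:F) = 1 + -2 by norm_num, T.add_smul', T.one_smul',
      show (-2:F) = -1 + -1 by norm_num, T.add_smul']
    rw [hm1]
  rw [T.neg_eq, am1, ← a1]

theorem z0_eq (x : V) : T.z0 x = T.smul (0:F) x := by
  show T.add x (T.neg x) = _
  rw [T.neg_eq, ← T.smul_zero_eq]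

theorem add_z0 (x : V) : T.add x (T.z0 x) = x := by
  rw [T.z0_eq, T.add_comm']; exact T.smul_zero_add x

theorem z0_add (x y : V) : T.z0 (T.add x y) = T.add (T.z0 x) (T.z0 y) := by
  simp only [T.z0_eq]; exact T.smul_add' 0 x y

theorem z0_z0 (x : V) : T.z0 (T.z0 x) = T.z0 x := by
  simp only [T.z0_eq, T.smul_smul']; norm_num

theorem z0_idem (x : V) : T.add (T.z0 x) (T.z0 x) = T.z0 x := by
  simp only [T.z0_eq]; rw [← T.add_smul']; norm_num

theorem z0_isIdem (x : V) : T.IsIdem (T.z0 x) := T.z0_idem x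

theorem idem_z0 {e : V} (he : T.IsIdem e) : T.z0 e = e := by
  show T.add e (T.neg e) = e
  rw [T.idem_neg he]; exact he

theorem neg_add' (x y : V) : T.neg (T.add x y) = T.add (T.neg x) (T.neg y) := by
  simp only [T.neg_eq, T.smul_add']

theorem idem_add {e f : V} (he : T.IsIdem e) (hf : T.IsIdem f) :
    T.IsIdem (T.add e f) := by
  show T.add (T.add e f) (T.add e f) = T.add e f
  have he' : T.add e e = e := he
  have hf' : T.add f f = f := hf
  rw [T.add_assoc', T.add_left_comm' f e f, hf', ← T.add_assoc', he']

theorem le_trans' {x y z : V} (hxy : T.le x y) (hyz : T.le y z) : T.le x z := by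
  have hxy' : x = T.add y (T.z0 x) := hxy
  have hyz' : y = T.add z (T.z0 y) := hyz
  have h0 : T.z0 x = T.add (T.z0 y) (T.z0 x) := by
    conv_lhs => rw [hxy']
    rw [T.z0_add, T.z0_z0]
  show x = T.add z (T.z0 x)
  calc x = T.add y (T.z0 x) := hxy'
    _ = T.add (T.add z (T.z0 y)) (T.z0 x) := by rw [← hyz']
    _ = T.add z (T.add (T.z0 y) (T.z0 x)) := T.add_assoc' _ _ _
    _ = T.add z (T.z0 x) := by rw [← h0]

end InvSemivectorSpace
namespace NAInvSemialgebra

open InvSemivectorSpace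

variable {F : Type*} [Field F] {V : Type*} (S : NAInvSemialgebra F V)

theorem neg_mul' (x y : V) : S.mul (S.neg x) y = S.neg (S.mul x y) := by
  rw [S.toInvSemivectorSpace.neg_eq x, S.toInvSemivectorSpace.neg_eq (S.mul x y),
    ← S.smul_mul (-1) (by norm_num)]

theorem mul_neg' (x y : V) : S.mul x (S.neg y) = S.neg (S.mul x y) := by
  rw [S.toInvSemivectorSpace.neg_eq y, S.toInvSemivectorSpace.neg_eq (S.mul x y),
    ← S.mul_smul'' (-1) (by norm_num)]

theorem mul_z0_isIdem (x y : V) : S.IsIdem (S.mul x (S.z0 y)) := by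
  show S.add (S.mul x (S.z0 y)) (S.mul x (S.z0 y)) = S.mul x (S.z0 y)
  rw [← S.mul_idem_add x (S.z0 y) (S.z0 y) (S.toInvSemivectorSpace.z0_isIdem y),
    S.toInvSemivectorSpace.z0_idem y]

theorem z0_mul_isIdem (x y : V) : S.IsIdem (S.mul (S.z0 x) y) := by
  show S.add (S.mul (S.z0 x) y) (S.mul (S.z0 x) y) = S.mul (S.z0 x) y
  rw [← S.idem_add_mul (S.z0 x) y (S.z0 x) (S.toInvSemivectorSpace.z0_isIdem x),
    S.toInvSemivectorSpace.z0_idem x]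

theorem le_z0_mul (x y : V) : S.le (S.z0 (S.mul x y)) (S.mul (S.z0 x) y) := by
  have h := S.add_mul_le x y (S.neg x)
  rw [S.neg_mul' x y] at h
  exact h

theorem le_mul_z0 (x y : V) : S.le (S.z0 (S.mul x y)) (S.mul x (S.z0 y)) := by
  have h := S.mul_add_le x y (S.neg y)
  rw [S.mul_neg' x y] at h
  exact h

theorem le_z0_mul_z0 (x y : V) :
    S.le (S.z0 (S.mul x y)) (S.mul (S.z0 x) (S.z0 y)) := by
  have h1 := S.le_z0_mul x y
  have h2 := S.le_mul_z0 (S.z0 x) y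
  rw [S.toInvSemivectorSpace.idem_z0 (S.z0_mul_isIdem x y)] at h2
  exact S.toInvSemivectorSpace.le_trans' h1 h2

end NAInvSemialgebra
theorem stmt_2 {F : Type*} [Field F] {V : Type*} (S : NAInvSemialgebra F V) :
    -- (1)
    (∀ e f : V, S.IsIdem e → S.IsIdem f →
      S.add (S.mul e f) (S.mul f e) = S.add e f) ∧
    -- (2)
    (∀ x y : V, S.IsIdem (S.mul x (S.z0 y)) ∧ S.IsIdem (S.mul (S.z0 x) y)) ∧
    -- (3)
    (∀ x y : V, S.le (S.z0 (S.mul x y)) (S.mul (S.z0 x) y) ∧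
      S.le (S.z0 (S.mul x y)) (S.mul x (S.z0 y)) ∧
      S.le (S.z0 (S.mul x y)) (S.mul (S.z0 x) (S.z0 y))) ∧
    -- (4)
    (∀ x y z : V,
      S.add (S.mul x (S.add y z)) (S.neg (S.add (S.mul x y) (S.mul x z))) =
        S.add (S.z0 (S.mul x y)) (S.z0 (S.mul x z))) := by
  refine ⟨?_, ?_, ?_, ?_⟩
  · -- (1)
    intro e f he hf
    have he' : S.add e e = e := he
    have hf' : S.add f f = f := hf
    have hef : S.IsIdem (S.mul e f) := by
      show S.add (S.mul e f) (S.mul e f) = S.mul e f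
      rw [← S.mul_idem_add e f f hf, hf']
    have hfe : S.IsIdem (S.mul f e) := by
      show S.add (S.mul f e) (S.mul f e) = S.mul f e
      rw [← S.mul_idem_add f e e he, he']
    have h2 : S.mul e f = S.add f (S.mul e f) := by
      have h' : S.mul e f = S.add f (S.z0 (S.mul e f)) := S.idem_mul_le₂ e f he hf
      rwa [S.toInvSemivectorSpace.idem_z0 hef] at h'
    have h2' : S.mul f e = S.add e (S.mul f e) := by
      have h' : S.mul f e = S.add e (S.z0 (S.mul f e)) := S.idem_mul_le₂ f e hf he
      rwa [S.toInvSemivectorSpace.idem_z0 hfe] at h'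
    have h1 : S.add e f = S.add (S.mul e f) (S.add e f) := by
      have h' : S.add e f = S.add (S.mul e f) (S.z0 (S.add e f)) :=
        S.idem_mul_le₁ e f he hf
      rwa [S.toInvSemivectorSpace.idem_z0 (S.toInvSemivectorSpace.idem_add he hf)] at h'
    have h1' : S.add f e = S.add (S.mul f e) (S.add f e) := by
      have h' : S.add f e = S.add (S.mul f e) (S.z0 (S.add f e)) :=
        S.idem_mul_le₁ f e hf he
      rwa [S.toInvSemivectorSpace.idem_z0 (S.toInvSemivectorSpace.idem_add hf he)] at h'
    calc S.add (S.mul e f) (S.mul f e)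
        = S.add (S.add f (S.mul e f)) (S.add e (S.mul f e)) := by rw [← h2, ← h2']
      _ = S.add (S.add (S.mul e f) (S.add e f)) (S.mul f e) := by
          simp only [S.toInvSemivectorSpace.add_assoc', S.toInvSemivectorSpace.add_comm',
            S.toInvSemivectorSpace.add_left_comm']
      _ = S.add (S.add e f) (S.mul f e) := by rw [← h1]
      _ = S.add (S.mul f e) (S.add e f) := S.toInvSemivectorSpace.add_comm' _ _
      _ = S.add (S.mul f e) (S.add f e) := by rw [S.toInvSemivectorSpace.add_comm' e f]
      _ = S.add f e := h1'.symm
      _ = S.add e f := S.toInvSemivectorSpace.add_comm' _ _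
  · -- (2)
    intro x y
    exact ⟨S.mul_z0_isIdem x y, S.z0_mul_isIdem x y⟩
  · -- (3)
    intro x y
    exact ⟨S.le_z0_mul x y, S.le_mul_z0 x y, S.le_z0_mul_z0 x y⟩
  · -- (4)
    intro x y z
    have hu : S.add (S.mul x y) (S.mul x z) =
        S.add (S.mul x (S.add y z)) (S.z0 (S.add (S.mul x y) (S.mul x z))) :=
      S.mul_add_le x y z
    have hnu : S.neg (S.add (S.mul x y) (S.mul x z)) =
        S.add (S.neg (S.mul x (S.add y z))) (S.z0 (S.add (S.mul x y) (S.mul x z))) := by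
      conv_lhs => rw [hu]
      rw [S.toInvSemivectorSpace.neg_add',
        S.toInvSemivectorSpace.idem_neg (S.toInvSemivectorSpace.z0_isIdem _)]
    have h0 : S.z0 (S.add (S.mul x y) (S.mul x z)) =
        S.add (S.z0 (S.mul x (S.add y z))) (S.z0 (S.add (S.mul x y) (S.mul x z))) := by
      conv_lhs => rw [hu]
      rw [S.toInvSemivectorSpace.z0_add, S.toInvSemivectorSpace.z0_z0]
    calc S.add (S.mul x (S.add y z)) (S.neg (S.add (S.mul x y) (S.mul x z)))
        = S.add (S.mul x (S.add y z)) (S.add (S.neg (S.mul x (S.add y z)))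
            (S.z0 (S.add (S.mul x y) (S.mul x z)))) := by rw [hnu]
      _ = S.add (S.add (S.mul x (S.add y z)) (S.neg (S.mul x (S.add y z))))
            (S.z0 (S.add (S.mul x y) (S.mul x z))) :=
          (S.toInvSemivectorSpace.add_assoc' _ _ _).symm
      _ = S.add (S.z0 (S.mul x (S.add y z)))
            (S.z0 (S.add (S.mul x y) (S.mul x z))) := rfl
      _ = S.z0 (S.add (S.mul x y) (S.mul x z)) := h0.symm
      _ = S.add (S.z0 (S.mul x y)) (S.z0 (S.mul x z)) :=
          S.toInvSemivectorSpace.z0_add _ _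
end

section
/- Let S be a semilattice of non-associative algebras over a field F, i.e. a non-associative inverse semialgebra satisfying 0_{x·y} = 0_{x+y} for all x, y ∈ S. Then S is distributive: x·(y+z) = x·y + x·z and (y+z)·x = y·x + z·x for all x, y, z ∈ S. -/
section Aux

variable {F : Type*} [Field F] {V : Type*} (S : InvSemivectorSpace F V)

lemma aux_left_comm : ∀ x y z : V, S.add x (S.add y z) = S.add y (S.add x z) := by
  intro x y z
  rw [← S.add_assoc', S.add_comm' x y, S.add_assoc']

lemma aux_neg_unique (u a b : V)
    (ha1 : S.add (S.add a u) a = a) (ha2 : S.add (S.add u a) u = u)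
    (hb1 : S.add (S.add b u) b = b) (hb2 : S.add (S.add u b) u = u) : a = b := by
  have h1 : a = S.add (S.add a u) b := by
    calc a = S.add (S.add a u) a := ha1.symm
      _ = S.add (S.add a (S.add (S.add u b) u)) a := by rw [hb2]
      _ = S.add (S.add (S.add (S.add a u) a) u) b := by
            simp only [S.add_assoc', S.add_comm', aux_left_comm]
      _ = S.add (S.add a u) b := by rw [ha1]
  have h2 : b = S.add (S.add b u) a := by
    calc b = S.add (S.add b u) b := hb1.symm
      _ = S.add (S.add b (S.add (S.add u a) u)) b := by rw [ha2]
      _ = S.add (S.add (S.add (S.add b u) b) u) a := by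
            simp only [S.add_assoc', S.add_comm', aux_left_comm]
      _ = S.add (S.add b u) a := by rw [hb1]
  calc a = S.add (S.add a u) b := h1
    _ = S.add (S.add b u) a := by simp only [S.add_assoc', S.add_comm', aux_left_comm]
    _ = b := h2.symm

lemma aux_neg_add (x y : V) :
    S.neg (S.add x y) = S.add (S.neg x) (S.neg y) := by
  apply aux_neg_unique S (S.add x y)
  · exact S.neg_add_neg _
  · exact S.add_neg_add _
  · calc S.add (S.add (S.add (S.neg x) (S.neg y)) (S.add x y)) (S.add (S.neg x) (S.neg y))
        = S.add (S.add (S.add (S.neg x) x) (S.neg x)) (S.add (S.add (S.neg y) y) (S.neg y)) := by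
          simp only [S.add_assoc', S.add_comm', aux_left_comm]
      _ = S.add (S.neg x) (S.neg y) := by rw [S.neg_add_neg, S.neg_add_neg]
  · calc S.add (S.add (S.add x y) (S.add (S.neg x) (S.neg y))) (S.add x y)
        = S.add (S.add (S.add x (S.neg x)) x) (S.add (S.add y (S.neg y)) y) := by
          simp only [S.add_assoc', S.add_comm', aux_left_comm]
      _ = S.add x y := by rw [S.add_neg_add, S.add_neg_add]

lemma aux_add_z0 (x : V) : S.add x (S.z0 x) = x := by
  show S.add x (S.add x (S.neg x)) = x
  calc S.add x (S.add x (S.neg x)) = S.add (S.add x (S.neg x)) x := S.add_comm' _ _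
    _ = x := S.add_neg_add x

lemma aux_z0_add (x y : V) : S.z0 (S.add x y) = S.add (S.z0 x) (S.z0 y) := by
  show S.add (S.add x y) (S.neg (S.add x y)) = S.add (S.add x (S.neg x)) (S.add y (S.neg y))
  rw [aux_neg_add]
  simp only [S.add_assoc', S.add_comm', aux_left_comm]

lemma aux_z0_idem (x : V) : S.add (S.z0 x) (S.z0 x) = S.z0 x := by
  show S.add (S.add x (S.neg x)) (S.add x (S.neg x)) = S.add x (S.neg x)
  calc S.add (S.add x (S.neg x)) (S.add x (S.neg x))
      = S.add (S.add (S.add x (S.neg x)) x) (S.neg x) := by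
        simp only [S.add_assoc', S.add_comm', aux_left_comm]
    _ = S.add x (S.neg x) := by rw [S.add_neg_add]

lemma aux_z0_eq (S' : InvSemivectorSpace F V) (x y z : V) :
    S'.z0 (S'.add (S'.add x y) (S'.add x z)) = S'.z0 (S'.add x (S'.add y z)) := by
  rw [aux_z0_add, aux_z0_add, aux_z0_add, aux_z0_add]
  calc S'.add (S'.add (S'.z0 x) (S'.z0 y)) (S'.add (S'.z0 x) (S'.z0 z))
      = S'.add (S'.add (S'.z0 x) (S'.z0 x)) (S'.add (S'.z0 y) (S'.z0 z)) := by
        simp only [S'.add_assoc', S'.add_comm', aux_left_comm]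
    _ = S'.add (S'.z0 x) (S'.add (S'.z0 y) (S'.z0 z)) := by rw [aux_z0_idem]
    _ = S'.add (S'.z0 x) (S'.z0 (S'.add y z)) := by rw [aux_z0_add]

end Aux

theorem stmt_9 {F : Type*} [Field F] {V : Type*} (S : NAInvSemialgebra F V)
    (hsem : ∀ x y : V, S.z0 (S.mul x y) = S.z0 (S.add x y)) :
    ∀ x y z : V,
      S.mul x (S.add y z) = S.add (S.mul x y) (S.mul x z) ∧
      S.mul (S.add y z) x = S.add (S.mul y x) (S.mul z x) := by
  intro x y z
  set T := S.toInvSemivectorSpace with hT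
  constructor
  · have h := S.mul_add_le x y z
    unfold InvSemivectorSpace.le at h
    have hz : T.z0 (T.add (S.mul x y) (S.mul x z)) = T.z0 (S.mul x (T.add y z)) := by
      rw [aux_z0_add, hsem, hsem, hsem, ← aux_z0_add]
      exact aux_z0_eq T x y z
    rw [hz] at h
    rw [h, aux_add_z0]
  · have h := S.add_mul_le y x z
    unfold InvSemivectorSpace.le at h
    have hz : T.z0 (T.add (S.mul y x) (S.mul z x)) = T.z0 (S.mul (T.add y z) x) := by
      rw [aux_z0_add, hsem, hsem, hsem, ← aux_z0_add]
      -- goal : z0 ((y+x)+(z+x)) = z0 ((y+z)+x)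
      rw [aux_z0_add, aux_z0_add, aux_z0_add, aux_z0_add]
      calc T.add (T.add (T.z0 y) (T.z0 x)) (T.add (T.z0 z) (T.z0 x))
          = T.add (T.add (T.z0 x) (T.z0 x)) (T.add (T.z0 y) (T.z0 z)) := by
            simp only [T.add_assoc', T.add_comm', aux_left_comm]
        _ = T.add (T.add (T.z0 y) (T.z0 z)) (T.z0 x) := by
            rw [aux_z0_idem]; exact T.add_comm' _ _
        _ = T.add (T.z0 (T.add y z)) (T.z0 x) := by rw [aux_z0_add]
    rw [hz] at h
    rw [h, aux_add_z0]
end
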